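/- Let H₁ and H₂ be complex Hilbert spaces and J : B(H₁) → B(H₂) a surjective Jordan *-isomorphism. Then J is either an algebra *-isomorphism or an algebra *-antiisomorphism; in the first case there is a unitary w : H₁ → H₂ with J(b) = w b w* for all b ∈ B(H₁). -/

import Mathlib

/-!
Herstein's argument. Polarising `f (a * a) = f a * f a` gives `f (a * b * a) = f a * f b * f a`
and its symmetrised three-variable form, from which the two defects
`δ = f (a * b) - f a * f b` and `δ' = f (a * b) - f b * f a` satisfy `δ * y * δ' + δ' * y * δ = 0`
for every `y` in the image of `f`. In `B(H)` this forces `δ = 0` or `δ' = 0` (test against rank-one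
operators), so every pair `(a, b)` is multiplicative or anti-multiplicative; since a group is never
the union of two proper subgroups, one alternative holds for all pairs at once.
In the multiplicative case `J` is a star-algebra isomorphism of C⋆-algebras, hence isometric, and a
continuous star-algebra isomorphism `B(H₁) ≃ B(H₂)` is conjugation by a unitary.
-/

open ContinuousLinearMap InnerProductSpace

theorem ContinuousLinearMap.eq_zero_or_eq_zero_of_forall_mul_mul_add_mul_mul_eq_zero
    {𝕜 H : Type*} [RCLike 𝕜] [NormedAddCommGroup H] [InnerProductSpace 𝕜 H]
    {u v : H →L[𝕜] H} (h : ∀ x, u * x * v + v * x * u = 0) : u = 0 ∨ v = 0 := by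
  refine or_iff_not_imp_right.mpr fun hv => ?_
  obtain ⟨ζ, hζ⟩ : ∃ ζ, v ζ ≠ 0 := by
    by_contra! hc
    exact hv (ext hc)
  have key (ξ z : H) : inner 𝕜 (v ζ) (v z) • u ξ + inner 𝕜 (v ζ) (u z) • v ξ = 0 := by
    simpa using congr($(h (rankOne 𝕜 ξ (v ζ))) z)
  have hvv : inner 𝕜 (v ζ) (v ζ) ≠ 0 := inner_self_ne_zero.mpr hζ
  have huv : inner 𝕜 (v ζ) (u ζ) = 0 := by
    have h2 := congr(inner 𝕜 (v ζ) $(key ζ ζ))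
    simp only [inner_add_right, inner_smul_right, inner_zero_right] at h2
    have : (2 : 𝕜) * inner 𝕜 (v ζ) (v ζ) * inner 𝕜 (v ζ) (u ζ) = 0 := by
      linear_combination h2
    simpa [hvv, hζ] using this
  ext ξ
  simpa [huv, hζ] using key ξ ζ

namespace AddMonoidHom

theorem eq_or_eq_of_forall_eq_or_eq {G M : Type*} [AddGroup G] [AddGroup M] (f g h : G →+ M)
    (hfgh : ∀ x, f x = g x ∨ f x = h x) : f = g ∨ f = h :=
  (AddSubgroupClass.subset_union (H := ⊤) (K := f.eqLocus g) (L := f.eqLocus h)).mp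
    (fun x _ => hfgh x) |>.imp (fun hg => ext fun _ => hg trivial)
      (fun hh => ext fun _ => hh trivial)

variable {A B : Type*} [Ring A] [Ring B] (f : A →+ B) (hf : ∀ a, f (a * a) = f a * f a)
include hf

theorem map_mul_add_mul_of_map_mul_self (a b : A) :
    f (a * b + b * a) = f a * f b + f b * f a := by
  have h := hf (a + b)
  simp only [map_add, add_mul, mul_add, hf] at h ⊢
  rw [← sub_eq_zero] at h ⊢
  rw [← h]
  abel

theorem map_mul_mul_self_of_map_mul_self [IsAddTorsionFree B] (a b : A) :
    f (a * b * a) = f a * f b * f a := by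
  have h2 : a * (a * b + b * a) + (a * b + b * a) * a - (a * a * b + b * (a * a))
      = 2 • (a * b * a) := by noncomm_ring
  have h2' := congr(f $h2)
  simp only [map_sub, map_nsmul, map_mul_add_mul_of_map_mul_self f hf, hf] at h2'
  refine nsmul_right_injective two_ne_zero (h2'.symm.trans ?_)
  noncomm_ring

theorem map_mul_mul_add_mul_mul_of_map_mul_self [IsAddTorsionFree B] (a b c : A) :
    f (a * b * c + c * b * a) = f a * f b * f c + f c * f b * f a := by
  have h := map_mul_mul_self_of_map_mul_self f hf (a + c) b
  simp only [map_add, add_mul, mul_add, map_mul_mul_self_of_map_mul_self f hf] at h ⊢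
  rw [← sub_eq_zero] at h ⊢
  rw [← h]
  abel

theorem sub_mul_map_mul_sub_add_sub_mul_map_mul_sub_eq_zero [IsAddTorsionFree B] (a b c : A) :
    (f (a * b) - f a * f b) * f c * (f (a * b) - f b * f a)
      + (f (a * b) - f b * f a) * f c * (f (a * b) - f a * f b) = 0 := by
  have hba : f (b * a) = f a * f b + f b * f a - f (a * b) :=
    eq_sub_of_add_eq' (by rw [← map_add, map_mul_add_mul_of_map_mul_self f hf])
  have hE : f (a * b) * f c * f (b * a) + f (b * a) * f c * f (a * b)
      = f a * f b * f c * (f b * f a) + f b * f a * f c * (f a * f b) := by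
    rw [← map_mul_mul_add_mul_mul_of_map_mul_self f hf,
      show a * b * c * (b * a) + b * a * c * (a * b) = a * (b * c * b) * a + b * (a * c * a) * b by
        noncomm_ring,
      map_add]
    simp only [map_mul_mul_self_of_map_mul_self f hf]
    noncomm_ring
  rw [hba] at hE
  rw [← sub_eq_zero.mpr hE.symm]
  noncomm_ring

theorem map_mul_or_map_mul_rev_of_map_mul_self [IsAddTorsionFree B] (hsurj : Function.Surjective f)
    (hprime : ∀ u v : B, (∀ x, u * x * v + v * x * u = 0) → u = 0 ∨ v = 0) :
    (∀ a b, f (a * b) = f a * f b) ∨ (∀ a b, f (a * b) = f b * f a) := by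
  have hpair (a b : A) : f (a * b) = f a * f b ∨ f (a * b) = f b * f a := by
    refine (hprime _ _ fun x => ?_).imp sub_eq_zero.mp sub_eq_zero.mp
    obtain ⟨c, rfl⟩ := hsurj x
    exact sub_mul_map_mul_sub_add_sub_mul_map_mul_sub_eq_zero f hf a b c
  -- `F a b = f (a * b)`, `G a b = f a * f b`, `H a b = f b * f a`
  let F : A →+ A →+ B := mul.compr₂ f
  let G : A →+ A →+ B := (mul.comp f).compl₂ f
  let H : A →+ A →+ B := (mul.flip.comp f).compl₂ f
  have hFGH := eq_or_eq_of_forall_eq_or_eq F G H fun a =>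
    eq_or_eq_of_forall_eq_or_eq _ _ _ (hpair a)
  exact hFGH.imp (fun h a b => DFunLike.congr_fun (DFunLike.congr_fun h a) b)
    (fun h a b => DFunLike.congr_fun (DFunLike.congr_fun h a) b)

end AddMonoidHom

theorem stmtN
    {H₁ H₂ : Type*}
    [NormedAddCommGroup H₁] [InnerProductSpace ℂ H₁] [CompleteSpace H₁]
    [NormedAddCommGroup H₂] [InnerProductSpace ℂ H₂] [CompleteSpace H₂]
    (J : (H₁ →L[ℂ] H₁) →ₗ[ℂ] (H₂ →L[ℂ] H₂))
    (hJbij : Function.Bijective J)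
    (hJsq : ∀ b : H₁ →L[ℂ] H₁, J (b * b) = J b * J b)
    (hJstar : ∀ b : H₁ →L[ℂ] H₁, J (star b) = star (J b)) :
    ((∀ a b : H₁ →L[ℂ] H₁, J (a * b) = J a * J b) ∨
      (∀ a b : H₁ →L[ℂ] H₁, J (a * b) = J b * J a)) ∧
    ((∀ a b : H₁ →L[ℂ] H₁, J (a * b) = J a * J b) →
      ∃ w : H₁ →L[ℂ] H₂, (∀ x : H₁, ‖w x‖ = ‖x‖) ∧ Function.Surjective w ∧
        ∀ b : H₁ →L[ℂ] H₁,
          J b = w ∘L b ∘L (ContinuousLinearMap.adjoint w)) := by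
  have := IsAddTorsionFree.of_isTorsionFree ℂ (H₂ →L[ℂ] H₂)
  refine ⟨J.toAddMonoidHom.map_mul_or_map_mul_rev_of_map_mul_self hJsq hJbij.2
    fun _ _ => eq_zero_or_eq_zero_of_forall_mul_mul_add_mul_mul_eq_zero, fun hmul => ?_⟩
  let Φ : (H₁ →L[ℂ] H₁) ≃⋆ₐ[ℂ] (H₂ →L[ℂ] H₂) :=
    { LinearEquiv.ofBijective J hJbij with map_mul' := hmul, map_star' := hJstar }
  set_option synthInstance.maxHeartbeats 60000 in
  obtain ⟨U, hU⟩ := Φ.eq_linearIsometryEquivConjStarAlgEquiv (StarAlgEquiv.isometry Φ).continuous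
  refine ⟨U, U.norm_map, U.surjective, fun b => ?_⟩
  rw [U.adjoint_eq_symm, ← LinearIsometryEquiv.conjStarAlgEquiv_apply, ← hU]
  rfl
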